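/- Direct subordinate reduction effect: let (i₀,j₀) be an arc of the circuit-free digraph Γ with δ⁻(j₀) ≥ 2, and suppose i₀ is not a predecessor in Γ of any other immediate predecessor of j₀ (i₀ ∉ IC(i₀,j₀)). If v is superadditive, then AF_{i₀}(N,v,Γ) ≥ AF_{i₀}(N,v,Γ−(i₀,j₀)). -/

import Mathlib

open scoped Classical
open Finset

section Preamble

variable {V : Type*} [Fintype V] [DecidableEq V]

/-- Adjacency relation of a digraph given by its arc set. -/
def Adj (A : Finset (V × V)) (i j : V) : Prop := (i, j) ∈ A

/-- A digraph is circuit-free if it contains no directed cycle. -/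
def CircuitFree (A : Finset (V × V)) : Prop :=
  ∀ i : V, ¬ Relation.TransGen (Adj A) i i

/-- In-degree of a node. -/
def inDeg (A : Finset (V × V)) (j : V) : ℕ :=
  (A.filter (fun a => a.2 = j)).card

/-- Weak connectivity (chains, ignoring orientation). -/
def WConn (A : Finset (V × V)) (i j : V) : Prop :=
  Relation.ReflTransGen (fun a b => (a, b) ∈ A ∨ (b, a) ∈ A) i j

/-- The weakly connected component of `i`, as a finset. -/
noncomputable def compF (A : Finset (V × V)) (i : V) : Finset V :=
  Finset.univ.filter (fun j => WConn A i j)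

/-- `IsPath A p` : `p` is a (nonempty) directed path along arcs of `A`. -/
def IsPath (A : Finset (V × V)) : List V → Prop
  | [] => False
  | [_] => True
  | i :: j :: l => (i, j) ∈ A ∧ IsPath A (j :: l)

/-- The digraph `A` restricted to the node set `K` is an arborescence:
there is a root `r ∈ K` with a unique directed path from `r` to every node of `K`. -/
def IsArbOn (A : Finset (V × V)) (K : Set V) : Prop :=
  ∃ r ∈ K, ∀ i ∈ K, ∃! p : List V,
    IsPath A p ∧ p.head? = some r ∧ p.getLast? = some i

/-- A forest: every weakly connected component is an arborescence. -/
def IsForest (A : Finset (V × V)) : Prop :=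
  ∀ i : V, IsArbOn A {j | WConn A i j}

/-- `F` is a maximal spanning forest of the digraph `A`. -/
def IsMaxSpanningForest (A F : Finset (V × V)) : Prop :=
  F ⊆ A ∧ IsForest F ∧ ∀ a ∈ A, a ∉ F → ¬ IsForest (insert a F)

/-- The collection of all maximal spanning forests of `A`. -/
noncomputable def maxForests (A : Finset (V × V)) : Finset (Finset (V × V)) :=
  A.powerset.filter (fun F => IsMaxSpanningForest A F)

/-- `S̄_F(i)` : the node `i` together with all its successors in `F`. -/
noncomputable def succSet (F : Finset (V × V)) (i : V) : Finset V :=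
  Finset.univ.filter (fun j => Relation.ReflTransGen (Adj F) i j)

/-- `Ŝ_F(i)` : the immediate successors of `i` in `F`. -/
noncomputable def immSucc (F : Finset (V × V)) (i : V) : Finset V :=
  Finset.univ.filter (fun j => (i, j) ∈ F)

/-- Marginal contribution of player `i` with respect to the forest `F`. -/
noncomputable def marg (v : Finset V → ℝ) (F : Finset (V × V)) (i : V) : ℝ :=
  v (succSet F i) - ∑ j ∈ immSucc F i, v (succSet F j)

/-- The Average Forest leadership measure. -/
noncomputable def AF (v : Finset V → ℝ) (A : Finset (V × V)) (i : V) : ℝ :=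
  (∑ F ∈ maxForests A, marg v F i) / (maxForests A).card

/-- The node sets of the arborescence components of a forest `F`. -/
noncomputable def comps (F : Finset (V × V)) : Finset (Finset V) :=
  Finset.univ.image (fun i => compF F i)

/-- Productivity of the organisational situation. -/
noncomputable def Productivity (v : Finset V → ℝ) (A : Finset (V × V)) : ℝ :=
  (∑ F ∈ maxForests A, ∑ K ∈ comps F, v K) / (maxForests A).card

/-- Superadditivity of a TU game. -/
def Superadditive (v : Finset V → ℝ) : Prop :=
  ∀ S Q : Finset V, Disjoint S Q → v S + v Q ≤ v (S ∪ Q)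

/-- Weak connectedness of the digraph. -/
def WeaklyConnected (A : Finset (V × V)) : Prop :=
  ∀ i j : V, WConn A i j

/-- Quasi-strong connectedness: existence of a root reaching every node. -/
def HasRoot (A : Finset (V × V)) : Prop :=
  ∃ r : V, ∀ i : V, Relation.ReflTransGen (Adj A) r i

end Preamble

/-!
The maximal spanning forests of a circuit-free digraph are exactly the ways of keeping one
incoming arc at every node that has one. They therefore split into classes according to the arc
entering `j₀`, and those of `Γ − (i₀, j₀)` are the classes of the other arcs. Reparenting `j₀`
from `i₀` to another immediate predecessor `i` is a bijection between classes. Since `i₀` does not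
reach `i`, it changes nothing `i₀` sees except that the subtree of `j₀` is cut off, and by
superadditivity this can only lower the marginal contribution of `i₀`. So the class of
`(i₀, j₀)` has the largest total, and averaging over the remaining classes gives no more than
averaging over all of them.
-/

open Relation

section Forests

variable {V : Type*} {G H : Finset (V × V)}

def AtMostOneParent (G : Finset (V × V)) : Prop :=
  ∀ ⦃a b j : V⦄, (a, j) ∈ G → (b, j) ∈ G → a = b

lemma AtMostOneParent.mono (hG : AtMostOneParent G) (h : H ⊆ G) : AtMostOneParent H :=
  fun _ _ _ ha hb => hG (h ha) (h hb)

lemma AtMostOneParent.eq_of_snd_eq (hd : AtMostOneParent G) {p q : V × V} (hp : p ∈ G)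
    (hq : q ∈ G) (h : p.2 = q.2) : p = q := by
  obtain ⟨x, j⟩ := p
  obtain ⟨y, k⟩ := q
  obtain rfl : j = k := h
  rw [hd hp hq]

lemma CircuitFree.mono (hG : CircuitFree G) (h : H ⊆ G) : CircuitFree H :=
  fun i hi => hG i (TransGen.mono (fun _ _ hab => h hab) _ _ hi)

lemma CircuitFree.not_reflTransGen (hG : CircuitFree G) {a b : V} (h : (a, b) ∈ G) :
    ¬ ReflTransGen (Adj G) b a :=
  fun hba => hG a (TransGen.head' h hba)

lemma isPath_iff_isChain : ∀ {p : List V}, IsPath G p ↔ p ≠ [] ∧ p.IsChain (Adj G)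
  | [] => by simp [IsPath]
  | [_] => by simp [IsPath]
  | _ :: j :: l => by
    simp [IsPath, isPath_iff_isChain (p := j :: l), List.isChain_cons_cons, Adj]

lemma exists_isPath_of_reflTransGen {s t : V} (h : ReflTransGen (Adj G) s t) :
    ∃ p, IsPath G p ∧ p.head? = some s ∧ p.getLast? = some t := by
  obtain ⟨l, hl, hlast⟩ := List.exists_isChain_cons_of_relationReflTransGen h
  exact ⟨s :: l, isPath_iff_isChain.2 ⟨List.cons_ne_nil _ _, hl⟩, rfl,
    by rw [List.getLast?_eq_getLast_of_ne_nil (List.cons_ne_nil _ _), hlast]⟩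

lemma IsPath.append_singleton {p : List V} {a c : V} (hp : IsPath G p)
    (hl : p.getLast? = some a) (h : (a, c) ∈ G) :
    IsPath G (p ++ [c]) ∧ (p ++ [c]).head? = p.head? := by
  obtain ⟨hne, hchain⟩ := isPath_iff_isChain.1 hp
  refine ⟨isPath_iff_isChain.2 ⟨by simp, hchain.append (.singleton c) ?_⟩,
    List.head?_append_of_ne_nil _ hne⟩
  simp_all [Adj]

lemma transGen_of_isChain_append_singleton {a c : V} :
    ∀ {p : List V}, (p ++ [c]).IsChain (Adj G) → p.head? = some a → TransGen (Adj G) a c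
  | [], _, h => by simp at h
  | x :: p, hp, h => by
    obtain rfl : x = a := by simpa using h
    rw [List.isChain_append] at hp
    exact TransGen.tail' (List.relationReflTransGen_of_exists_isChain_cons p hp.1 rfl)
      (hp.2.2 _ (by simp [List.getLast?_eq_getLast_of_ne_nil]) c rfl)

/-- Walk back from the common last node along the unique parents; circuit-freeness rules out
one path being a proper suffix of the other. -/
lemma eq_of_isChain_of_head?_eq_of_getLast?_eq (hd : AtMostOneParent G) (hG : CircuitFree G)
    {p q : List V} (hp : p.IsChain (Adj G)) (hq : q.IsChain (Adj G)) (hne : p ≠ [])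
    (hh : p.head? = q.head?) (hl : p.getLast? = q.getLast?) : p = q := by
  induction p using List.reverseRecOn generalizing q with
  | nil => exact absurd rfl hne
  | append_singleton p c ih =>
    induction q using List.reverseRecOn with
    | nil => simp at hl
    | append_singleton q c' _ =>
      obtain rfl : c = c' := by simpa using hl
      have hp' := List.isChain_append.1 hp
      have hq' := List.isChain_append.1 hq
      rcases hpl : p.getLast? with _ | b <;> rcases hql : q.getLast? with _ | b'
      · simp_all
      · have hqne : q ≠ [] := by simp [← List.getLast?_eq_none_iff, hql]
        obtain rfl := List.getLast?_eq_none_iff.1 hpl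
        refine absurd (transGen_of_isChain_append_singleton hq ?_) (hG c)
        rw [← List.head?_append_of_ne_nil _ hqne, ← hh, List.nil_append, List.head?_cons]
      · have hpne : p ≠ [] := by simp [← List.getLast?_eq_none_iff, hpl]
        obtain rfl := List.getLast?_eq_none_iff.1 hql
        refine absurd (transGen_of_isChain_append_singleton hp ?_) (hG c)
        rw [← List.head?_append_of_ne_nil _ hpne, hh, List.nil_append, List.head?_cons]
      · obtain rfl : b = b' := hd (hp'.2.2 b hpl c rfl) (hq'.2.2 b' hql c rfl)
        have hpne : p ≠ [] := by simp [← List.getLast?_eq_none_iff, hpl]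
        have hqne : q ≠ [] := by simp [← List.getLast?_eq_none_iff, hql]
        rw [ih hp'.1 hq'.1 hpne (by simpa [List.head?_append_of_ne_nil _ hpne,
          List.head?_append_of_ne_nil _ hqne] using hh) (hpl.trans hql.symm)]

lemma IsForest.atMostOneParent (hF : IsForest G) : AtMostOneParent G := by
  intro a b j ha hb
  obtain ⟨_, -, hpaths⟩ := hF j
  obtain ⟨pa, ⟨hpa, hpah, hpal⟩, -⟩ := hpaths a (ReflTransGen.single (Or.inr ha))
  obtain ⟨pb, ⟨hpb, hpbh, hpbl⟩, -⟩ := hpaths b (ReflTransGen.single (Or.inr hb))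
  obtain ⟨hpa', hpah'⟩ := hpa.append_singleton hpal ha
  obtain ⟨hpb', hpbh'⟩ := hpb.append_singleton hpbl hb
  have : pa ++ [j] = pb ++ [j] := (hpaths j ReflTransGen.refl).unique
    ⟨hpa', hpah'.trans hpah, by simp⟩ ⟨hpb', hpbh'.trans hpbh, by simp⟩
  rw [List.append_cancel_right this, hpbl] at hpal
  exact (Option.some_inj.1 hpal).symm

lemma exists_parentless_ancestor [Finite V] (hG : CircuitFree G) (x : V) :
    ∃ r, ReflTransGen (Adj G) r x ∧ ∀ z, (z, r) ∉ G := by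
  have : IsTrans V (TransGen (Adj G)) := ⟨fun _ _ _ => TransGen.trans⟩
  have : Std.Irrefl (TransGen (Adj G)) := ⟨hG⟩
  obtain ⟨r, hr, hmin⟩ := (Finite.wellFounded_of_trans_of_irrefl (TransGen (Adj G))).has_min
    {y | ReflTransGen (Adj G) y x} ⟨x, .refl⟩
  exact ⟨r, hr, fun z hz => hmin z (.head hz hr) (.single hz)⟩

lemma AtMostOneParent.reflTransGen_total (hd : AtMostOneParent G) {p q x : V}
    (hp : ReflTransGen (Adj G) p x) (hq : ReflTransGen (Adj G) q x) :
    ReflTransGen (Adj G) p q ∨ ReflTransGen (Adj G) q p := by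
  induction hp with
  | refl => exact Or.inr hq
  | tail hpy step ih =>
    rcases hq.cases_tail with rfl | ⟨c, hqc, hc⟩
    · exact Or.inl (hpy.tail step)
    · exact ih (by rwa [hd hc step] at hqc)

lemma AtMostOneParent.eq_of_parentless (hd : AtMostOneParent G) {r r' x : V}
    (hr : ∀ z, (z, r) ∉ G) (hr' : ∀ z, (z, r') ∉ G)
    (hrx : ReflTransGen (Adj G) r x) (hr'x : ReflTransGen (Adj G) r' x) : r = r' := by
  rcases hd.reflTransGen_total hrx hr'x with h | h
  · exact (h.cases_tail.resolve_right fun ⟨c, _, hc⟩ => hr' c hc).symm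
  · exact h.cases_tail.resolve_right fun ⟨c, _, hc⟩ => hr c hc

/-- Along a backward arc `(c, b)`, the parentless ancestor of `c` also reaches `b`, so it
is `r`. -/
lemma AtMostOneParent.reflTransGen_of_wConn [Finite V] (hd : AtMostOneParent G)
    (hG : CircuitFree G) {r x y : V} (hr : ∀ z, (z, r) ∉ G)
    (hrx : ReflTransGen (Adj G) r x) (hxy : WConn G x y) : ReflTransGen (Adj G) r y := by
  induction hxy with
  | refl => exact hrx
  | tail _ step ih =>
    rcases step with hbc | hcb
    · exact ih.tail hbc
    · obtain ⟨r', hr'c, hr'⟩ := exists_parentless_ancestor hG _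
      rwa [hd.eq_of_parentless hr hr' ih (hr'c.tail hcb)]

lemma isForest_of_atMostOneParent [Finite V] (hd : AtMostOneParent G) (hG : CircuitFree G) :
    IsForest G := by
  intro i
  obtain ⟨r, hri, hr⟩ := exists_parentless_ancestor hG i
  have hir : WConn G i r :=
    ReflTransGen.mono (fun _ _ h => Or.inr h) _ _ hri.swap
  refine ⟨r, hir, fun x hx => ?_⟩
  obtain ⟨p, hp, hph, hpl⟩ :=
    exists_isPath_of_reflTransGen (hd.reflTransGen_of_wConn hG hr hri hx)
  refine ⟨p, ⟨hp, hph, hpl⟩, fun q ⟨hq, hqh, hql⟩ => ?_⟩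
  obtain ⟨hqne, hqc⟩ := isPath_iff_isChain.1 hq
  exact eq_of_isChain_of_head?_eq_of_getLast?_eq hd hG hqc (isPath_iff_isChain.1 hp).2 hqne
    (hqh.trans hph.symm) (hql.trans hpl.symm)

end Forests

section MaxForests

variable {V : Type*} [DecidableEq V] {A F G : Finset (V × V)}

lemma atMostOneParent_insert {x j : V} :
    AtMostOneParent (insert (x, j) G) ↔ AtMostOneParent G ∧ ∀ y, (y, j) ∈ G → y = x := by
  refine ⟨fun h => ⟨h.mono (subset_insert _ _), fun y hy =>
    h (mem_insert_of_mem hy) (mem_insert_self _ _)⟩, fun ⟨hd, hx⟩ a b k ha hb => ?_⟩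
  rw [mem_insert, Prod.mk.injEq] at ha hb
  rcases ha with ⟨rfl, rfl⟩ | ha
  · rcases hb with ⟨rfl, -⟩ | hb
    exacts [rfl, (hx b hb).symm]
  · rcases hb with ⟨rfl, rfl⟩ | hb
    exacts [hx a ha, hd ha hb]

lemma isMaxSpanningForest_iff [Finite V] (hA : CircuitFree A) :
    IsMaxSpanningForest A F ↔
      F ⊆ A ∧ AtMostOneParent F ∧ ∀ a ∈ A, ∃ y, (y, a.2) ∈ F := by
  constructor
  · rintro ⟨hFA, hF, hmax⟩
    refine ⟨hFA, hF.atMostOneParent, fun ⟨x, j⟩ ha => ?_⟩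
    by_contra! hno
    refine hmax (x, j) ha (hno x) (isForest_of_atMostOneParent ?_ (hA.mono (insert_subset ha hFA)))
    exact atMostOneParent_insert.2 ⟨hF.atMostOneParent, fun y hy => absurd hy (hno y)⟩
  · rintro ⟨hFA, hd, hcov⟩
    refine ⟨hFA, isForest_of_atMostOneParent hd (hA.mono hFA), fun ⟨x, j⟩ ha haF hins => ?_⟩
    obtain ⟨y, hy⟩ := hcov _ ha
    obtain rfl := (atMostOneParent_insert.1 hins.atMostOneParent).2 y hy
    exact haF hy

lemma mem_maxForests_iff [Finite V] (hA : CircuitFree A) :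
    F ∈ maxForests A ↔
      F ⊆ A ∧ AtMostOneParent F ∧ ∀ a ∈ A, ∃ y, (y, a.2) ∈ F := by
  rw [maxForests, mem_filter, mem_powerset, isMaxSpanningForest_iff hA]
  exact ⟨And.right, fun h => ⟨h.1, h⟩⟩

lemma atMostOneParent_of_mem_maxForests (hF : F ∈ maxForests A) : AtMostOneParent F :=
  (mem_filter.1 hF).2.2.1.atMostOneParent

def inArcs (A : Finset (V × V)) (j : V) : Finset (V × V) :=
  A.filter (fun a => a.2 = j)

noncomputable def forestsThrough (A : Finset (V × V)) (a : V × V) : Finset (Finset (V × V)) :=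
  (maxForests A).filter (a ∈ ·)

lemma pairwiseDisjoint_forestsThrough (A : Finset (V × V)) (j : V) :
    (inArcs A j : Set (V × V)).PairwiseDisjoint (forestsThrough A) := by
  intro p hp q hq hpq
  refine disjoint_left.2 fun F hFp hFq => hpq ?_
  simp only [forestsThrough, inArcs, mem_coe, mem_filter] at hp hq hFp hFq
  exact (atMostOneParent_of_mem_maxForests hFp.1).eq_of_snd_eq hFp.2 hFq.2 (hp.2.trans hq.2.symm)

lemma maxForests_eq_biUnion [Finite V] (hA : CircuitFree A) {a : V × V} (ha : a ∈ A) :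
    maxForests A = (inArcs A a.2).biUnion (forestsThrough A) := by
  ext F
  simp only [mem_biUnion, forestsThrough, inArcs, mem_filter]
  refine ⟨fun hF => ?_, fun ⟨_, _, hF, _⟩ => hF⟩
  obtain ⟨hFA, -, hcov⟩ := (mem_maxForests_iff hA).1 hF
  obtain ⟨y, hy⟩ := hcov a ha
  exact ⟨(y, a.2), ⟨hFA hy, rfl⟩, hF, hy⟩

lemma maxForests_erase_eq_biUnion [Finite V] (hA : CircuitFree A) {a b : V × V} (ha : a ∈ A)
    (hb : b ∈ inArcs A a.2) (hba : b ≠ a) :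
    maxForests (A.erase a) = ((inArcs A a.2).erase a).biUnion (forestsThrough A) := by
  ext F
  simp only [mem_biUnion, mem_erase, forestsThrough, mem_filter,
    mem_maxForests_iff hA, mem_maxForests_iff (hA.mono (erase_subset a A))]
  constructor
  · rintro ⟨hFA, hd, hcov⟩
    have hcov' : ∀ c ∈ A, ∃ y, (y, c.2) ∈ F := fun c hc => by
      rcases eq_or_ne c a with rfl | hca
      · rw [← (mem_filter.1 hb).2]; exact hcov b ⟨hba, (mem_filter.1 hb).1⟩
      · exact hcov c ⟨hca, hc⟩
    obtain ⟨y, hy⟩ := hcov' a ha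
    refine ⟨(y, a.2), ⟨fun h => (mem_erase.1 (hFA (h ▸ hy))).1 rfl, ?_⟩,
      ⟨hFA.trans (erase_subset a A), hd, hcov'⟩, hy⟩
    exact mem_filter.2 ⟨(mem_erase.1 (hFA hy)).2, rfl⟩
  · rintro ⟨p, ⟨hpa, hp⟩, ⟨hFA, hd, hcov⟩, hpF⟩
    have haF : a ∉ F := fun haF => hpa (hd.eq_of_snd_eq hpF haF (mem_filter.1 hp).2)
    exact ⟨fun c hc => mem_erase.2 ⟨fun h => haF (h ▸ hc), hFA hc⟩, hd,
      fun c hc => hcov c hc.2⟩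

def reparent (F : Finset (V × V)) (j b : V) : Finset (V × V) :=
  insert (b, j) (F.filter (·.2 ≠ j))

lemma reparent_reparent (F : Finset (V × V)) (j a b : V) :
    reparent (reparent F j b) j a = reparent F j a := by
  ext c
  simp only [reparent, mem_insert, mem_filter]
  grind

lemma reparent_eq_self (hd : AtMostOneParent F) {a j : V} (h : (a, j) ∈ F) :
    reparent F j a = F := by
  ext ⟨x, k⟩
  simp only [reparent, mem_insert, mem_filter, Prod.mk.injEq]
  constructor
  · rintro (⟨rfl, rfl⟩ | ⟨hx, -⟩)
    exacts [h, hx]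
  · intro hx
    rcases eq_or_ne k j with rfl | hk
    · exact Or.inl ⟨hd hx h, rfl⟩
    · exact Or.inr ⟨hx, hk⟩

lemma reparent_mem_maxForests [Finite V] (hA : CircuitFree A) (hF : F ∈ maxForests A)
    {b j : V} (hb : (b, j) ∈ A) : reparent F j b ∈ maxForests A := by
  obtain ⟨hFA, hd, hcov⟩ := (mem_maxForests_iff hA).1 hF
  refine (mem_maxForests_iff hA).2 ⟨insert_subset hb ((filter_subset _ _).trans hFA),
    atMostOneParent_insert.2 ⟨hd.mono (filter_subset _ _), fun y hy => ?_⟩, fun c hc => ?_⟩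
  · exact absurd rfl (mem_filter.1 hy).2
  · rcases eq_or_ne c.2 j with hcj | hcj
    · exact ⟨b, hcj ▸ mem_insert_self _ _⟩
    · obtain ⟨y, hy⟩ := hcov c hc
      exact ⟨y, mem_insert_of_mem (mem_filter.2 ⟨hy, hcj⟩)⟩

lemma sum_forestsThrough_eq_sum_reparent {M : Type*} [AddCommMonoid M] [Finite V]
    (hA : CircuitFree A) {a b j : V} (ha : (a, j) ∈ A) (hb : (b, j) ∈ A)
    (g : Finset (V × V) → M) :
    ∑ F ∈ forestsThrough A (b, j), g F =
      ∑ F ∈ forestsThrough A (a, j), g (reparent F j b) := by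
  have hmaps : ∀ {c d : V}, (d, j) ∈ A → ∀ F ∈ forestsThrough A (c, j),
      reparent F j d ∈ forestsThrough A (d, j) := fun hd F hF =>
    mem_filter.2 ⟨reparent_mem_maxForests hA (mem_filter.1 hF).1 hd, mem_insert_self _ _⟩
  have hinv : ∀ {c d : V}, ∀ F ∈ forestsThrough A (c, j), reparent (reparent F j d) j c = F :=
    fun F hF => by
      rw [reparent_reparent, reparent_eq_self (atMostOneParent_of_mem_maxForests
        (mem_filter.1 hF).1) (mem_filter.1 hF).2]
  exact sum_nbij' (reparent · j a) (reparent · j b) (hmaps ha) (hmaps hb) hinv hinv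
    (fun F hF => by rw [hinv F hF])

lemma card_forestsThrough_eq [Finite V] (hA : CircuitFree A) {a b j : V} (ha : (a, j) ∈ A)
    (hb : (b, j) ∈ A) : #(forestsThrough A (b, j)) = #(forestsThrough A (a, j)) := by
  rw [card_eq_sum_ones, card_eq_sum_ones]
  exact sum_forestsThrough_eq_sum_reparent hA ha hb (fun _ => 1)

end MaxForests

section Marginal

variable {V : Type*} [Fintype V] [DecidableEq V] {G F : Finset (V × V)}

lemma succSet_insert_of_not_reflTransGen {s u w : V} (h : ¬ ReflTransGen (Adj G) s u) :
    succSet (insert (u, w) G) s = succSet G s := by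
  ext x
  simp only [succSet, mem_filter, mem_univ, true_and]
  refine ⟨fun hx => ?_, ReflTransGen.mono (fun _ _ hab => mem_insert_of_mem hab) _ _⟩
  induction hx with
  | refl => exact .refl
  | tail _ step ih =>
    rcases mem_insert.1 step with heq | hmem
    · exact absurd ((Prod.mk.inj heq).1 ▸ ih) h
    · exact ih.tail hmem

lemma succSet_insert_self {s t : V} :
    succSet (insert (s, t) G) s = succSet G s ∪ succSet G t := by
  ext x
  simp only [succSet, mem_union, mem_filter, mem_univ, true_and]
  refine ⟨fun hx => ?_, ?_⟩
  · induction hx with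
    | refl => exact Or.inl .refl
    | tail _ step ih =>
      rcases mem_insert.1 step with heq | hmem
      · exact Or.inr ((Prod.mk.inj heq).2 ▸ .refl)
      · exact ih.imp (·.tail hmem) (·.tail hmem)
  · have hmono := ReflTransGen.mono (r := Adj G) (p := Adj (insert (s, t) G))
      (fun _ _ hab => mem_insert_of_mem hab)
    rintro (hx | hx)
    exacts [hmono _ _ hx, .head (mem_insert_self _ _) (hmono _ _ hx)]

lemma immSucc_insert_of_ne {s u w : V} (h : u ≠ s) :
    immSucc (insert (u, w) G) s = immSucc G s := by
  ext x
  simp [immSucc, Ne.symm h]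

lemma immSucc_insert_self {s t : V} : immSucc (insert (s, t) G) s = insert t (immSucc G s) := by
  ext x
  simp [immSucc, eq_comm]

/-- A common node makes `s` and `t` comparable, which gives either a circuit or a second
parent of `t`. -/
lemma disjoint_succSet_of_insert {s t : V} (hd : AtMostOneParent (insert (s, t) G))
    (hG : CircuitFree (insert (s, t) G)) (hst : (s, t) ∉ G) :
    Disjoint (succSet G s) (succSet G t) := by
  have hmono := ReflTransGen.mono (r := Adj G) (p := Adj (insert (s, t) G))
    (fun _ _ hab => mem_insert_of_mem hab)
  rw [disjoint_left]
  intro x hsx htx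
  simp only [succSet, mem_filter, mem_univ, true_and] at hsx htx
  rcases (hd.mono (subset_insert _ _)).reflTransGen_total hsx htx with h | h
  · rcases h.cases_tail with rfl | ⟨c, -, hc⟩
    · exact hG _ (.single (mem_insert_self _ _))
    · exact hst (hd (mem_insert_of_mem hc) (mem_insert_self _ _) ▸ hc)
  · exact hG.not_reflTransGen (mem_insert_self _ _) (hmono _ _ h)

lemma marg_insert_of_not_reflTransGen (v : Finset V → ℝ) {s u w : V}
    (h : ¬ ReflTransGen (Adj G) s u) : marg v (insert (u, w) G) s = marg v G s := by
  have hus : u ≠ s := fun hus => h (hus ▸ .refl)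
  unfold marg
  rw [immSucc_insert_of_ne hus, succSet_insert_of_not_reflTransGen h]
  refine congrArg _ (sum_congr rfl fun j hj => ?_)
  rw [succSet_insert_of_not_reflTransGen fun hju => h (.head ?_ hju)]
  show (s, j) ∈ G
  simpa [immSucc] using hj

lemma marg_le_marg_insert {v : Finset V → ℝ} (hsa : Superadditive v) {s t : V}
    (hd : AtMostOneParent (insert (s, t) G)) (hG : CircuitFree (insert (s, t) G))
    (hst : (s, t) ∉ G) : marg v G s ≤ marg v (insert (s, t) G) s := by
  have hback : ∀ {j}, (s, j) ∈ insert (s, t) G → succSet (insert (s, t) G) j = succSet G j :=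
    fun hj => succSet_insert_of_not_reflTransGen fun h => hG.not_reflTransGen hj
      (ReflTransGen.mono (fun _ _ hab => mem_insert_of_mem hab) _ _ h)
  have ht : t ∉ immSucc G s := by simpa [immSucc] using hst
  have hsuper := hsa _ _ (disjoint_succSet_of_insert hd hG hst)
  unfold marg
  rw [immSucc_insert_self, sum_insert ht, succSet_insert_self, hback (mem_insert_self _ _),
    sum_congr rfl fun j hj => congrArg v (hback (mem_insert_of_mem (by simpa [immSucc] using hj)))]
  linarith

lemma marg_reparent_le {v : Finset V → ℝ} (hsa : Superadditive v) (hF : CircuitFree F)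
    (hd : AtMostOneParent F) {s t i : V} (hst : (s, t) ∈ F) (hsi : ¬ ReflTransGen (Adj F) s i) :
    marg v (reparent F t i) s ≤ marg v F s := by
  set E := F.filter (·.2 ≠ t)
  have hFE : insert (s, t) E = F := reparent_eq_self hd hst
  calc marg v (reparent F t i) s = marg v E s :=
        marg_insert_of_not_reflTransGen v fun h =>
          hsi (ReflTransGen.mono (fun _ _ hab => filter_subset _ F hab) _ _ h)
    _ ≤ marg v (insert (s, t) E) s :=
        marg_le_marg_insert hsa (hFE ▸ hd) (hFE ▸ hF) (by simp [E])
    _ = marg v F s := by rw [hFE]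

lemma sum_marg_forestsThrough_le {A : Finset (V × V)} (hA : CircuitFree A)
    {v : Finset V → ℝ} (hsa : Superadditive v) {s t i : V} (hs : (s, t) ∈ A)
    (hi : (i, t) ∈ A) (hsi : ¬ ReflTransGen (Adj A) s i) :
    ∑ F ∈ forestsThrough A (i, t), marg v F s ≤
      ∑ F ∈ forestsThrough A (s, t), marg v F s := by
  rw [sum_forestsThrough_eq_sum_reparent hA hs hi]
  refine sum_le_sum fun F hF => ?_
  obtain ⟨hFA, hd, -⟩ := (mem_maxForests_iff hA).1 (mem_filter.1 hF).1
  exact marg_reparent_le hsa (hA.mono hFA) hd (mem_filter.1 hF).2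
    fun h => hsi (ReflTransGen.mono (fun _ _ hab => hFA hab) _ _ h)

end Marginal

lemma sum_erase_div_card_le_sum_div_card {ι : Type*} [DecidableEq ι] {s : Finset ι}
    {f : ι → ℝ} {a : ι} (ha : a ∈ s) (hs : (s.erase a).Nonempty) (hf : ∀ i ∈ s, f i ≤ f a) :
    (∑ i ∈ s.erase a, f i) / #(s.erase a) ≤ (∑ i ∈ s, f i) / #s := by
  have hle : ∑ i ∈ s.erase a, f i ≤ #(s.erase a) * f a := by
    simpa using sum_le_card_nsmul (s.erase a) f (f a) fun i hi => hf i (mem_of_mem_erase hi)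
  have hn : (0 : ℝ) < #(s.erase a) := by exact_mod_cast hs.card_pos
  rw [← add_sum_erase s f ha, ← card_erase_add_one ha, div_le_div_iff₀ hn (by positivity)]
  push_cast
  nlinarith

lemma AF_eq_sum_div {V : Type*} [Fintype V] [DecidableEq V] {A G Q : Finset (V × V)}
    (v : Finset V → ℝ) {i j : V} {m : ℕ} (hQ : Q ⊆ inArcs A j)
    (hG : maxForests G = Q.biUnion (forestsThrough A))
    (hm : ∀ p ∈ Q, #(forestsThrough A p) = m) :
    AF v G i = (∑ p ∈ Q, ∑ F ∈ forestsThrough A p, marg v F i) / (#Q * m) := by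
  have hdisj := (pairwiseDisjoint_forestsThrough A j).subset (coe_subset.2 hQ)
  rw [AF, hG, sum_biUnion hdisj, card_biUnion hdisj, sum_congr rfl hm, sum_const, smul_eq_mul]
  push_cast
  rfl

theorem AF_direct_subordinate_reduction_general {V : Type*} [Fintype V] [DecidableEq V]
    (A : Finset (V × V)) (hA : CircuitFree A)
    (v : Finset V → ℝ) (hsa : Superadditive v)
    (i₀ j₀ : V) (ha : (i₀, j₀) ∈ A) (hdeg : 2 ≤ inDeg A j₀)
    (hIC : ∀ i : V, (i, j₀) ∈ A → i ≠ i₀ → ¬ Relation.TransGen (Adj A) i₀ i) :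
    AF v (A.erase (i₀, j₀)) i₀ ≤ AF v A i₀ := by
  set P := inArcs A j₀
  set m := #(forestsThrough A (i₀, j₀))
  have hP : (i₀, j₀) ∈ P := mem_filter.2 ⟨ha, rfl⟩
  obtain ⟨b, hbP, hb⟩ := exists_mem_ne hdeg (i₀, j₀)
  have hm : ∀ p ∈ P, #(forestsThrough A p) = m := fun ⟨x, j⟩ hp => by
    obtain ⟨hx, rfl⟩ := mem_filter.1 hp
    exact card_forestsThrough_eq hA ha hx
  have hS : ∀ p ∈ P, ∑ F ∈ forestsThrough A p, marg v F i₀ ≤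
      ∑ F ∈ forestsThrough A (i₀, j₀), marg v F i₀ := fun ⟨x, j⟩ hp => by
    obtain ⟨hx, rfl⟩ := mem_filter.1 hp
    rcases eq_or_ne x i₀ with rfl | hxi
    · exact le_rfl
    · refine sum_marg_forestsThrough_le hA hsa ha hx fun h => ?_
      exact (reflTransGen_iff_eq_or_transGen.1 h).elim hxi (hIC x hx hxi)
  rw [AF_eq_sum_div v (erase_subset _ P) (maxForests_erase_eq_biUnion hA ha hbP hb)
      fun p hp => hm p (mem_of_mem_erase hp),
    AF_eq_sum_div v subset_rfl (maxForests_eq_biUnion hA ha) hm, ← div_div, ← div_div]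
  exact div_le_div_of_nonneg_right
    (sum_erase_div_card_le_sum_div_card hP ⟨b, mem_erase.2 ⟨hb, hbP⟩⟩ hS) m.cast_nonneg

/-- direct subordinate reduction effect: if `(i₀, j₀)` is an arc with
`δ⁻(j₀) ≥ 2`, `i₀` is not a predecessor of any other immediate predecessor of `j₀`, and
`v` is superadditive, then deleting `(i₀, j₀)` does not increase the AF value of `i₀`. -/
theorem AF_direct_subordinate_reduction {V : Type*} [Fintype V] [DecidableEq V]
    (A : Finset (V × V)) (hA : CircuitFree A)
    (v : Finset V → ℝ) (hv0 : v ∅ = 0) (hsa : Superadditive v)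
    (i₀ j₀ : V) (ha : (i₀, j₀) ∈ A) (hdeg : 2 ≤ inDeg A j₀)
    (hIC : ∀ i : V, (i, j₀) ∈ A → i ≠ i₀ → ¬ Relation.TransGen (Adj A) i₀ i) :
    AF v (A.erase (i₀, j₀)) i₀ ≤ AF v A i₀ :=
  AF_direct_subordinate_reduction_general A hA v hsa i₀ j₀ ha hdeg hIC
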